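/- arXiv:1506.02522 — 6 statements merged into one kernel-verified Lean document; each statement's English description precedes it below -/
import Mathlib

section
/- Under the conditions a < 1, b < 1, and cd < ((1-ab)/(2b))^2 with a,b > 0 and c,d ≥ 0, the sequence defined by s₀ = 0 and s_{i+1} = (bd + ba s_i)/(1 - bc s_i) is monotonically increasing, remains in [0, s₁*], and converges to the smaller fixed point s₁* = 2bd/(1 - ba + sqrt((1-ba)² - 4b²cd)). -/
set_option maxHeartbeats 1000000
/-- With `0 < a < 1`, `0 < b < 1`, `c, d ≥ 0` and `4 b² c d < (1 - a b)²`,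
the sequence `s₀ = 0`, `s_{i+1} = (b d + b a sᵢ)/(1 - b c sᵢ)` is increasing,
stays in `[0, s₁*]` (in particular `1 - b c sᵢ > 0` along the trajectory),
and converges to the smaller fixed point `s₁*`. -/
theorem stmt1 (a b c d : ℝ) (ha : 0 < a) (ha1 : a < 1) (hb : 0 < b) (hb1 : b < 1)
    (hc : 0 ≤ c) (hd : 0 ≤ d) (hcd : 4 * b ^ 2 * c * d < (1 - a * b) ^ 2)
    (s : ℕ → ℝ) (h0 : s 0 = 0)
    (hrec : ∀ i, s (i + 1) = (b * d + b * a * s i) / (1 - b * c * s i)) :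
    let s1 : ℝ := 2 * b * d / (1 - b * a + Real.sqrt ((1 - b * a) ^ 2 - 4 * b ^ 2 * c * d))
    Monotone s ∧ (∀ i, 0 ≤ s i ∧ s i ≤ s1 ∧ 0 < 1 - b * c * s i) ∧
      Filter.Tendsto s Filter.atTop (nhds s1) := by
  intro s1
  have hab' : (1 - a * b) ^ 2 = (1 - b * a) ^ 2 := by ring
  set r : ℝ := Real.sqrt ((1 - b * a) ^ 2 - 4 * b ^ 2 * c * d) with hrdef
  have hab : b * a < 1 := by nlinarith
  have hΔ : 0 < (1 - b * a) ^ 2 - 4 * b ^ 2 * c * d := by nlinarith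
  have hr0 : 0 < r := Real.sqrt_pos.2 hΔ
  have hr2 : r ^ 2 = (1 - b * a) ^ 2 - 4 * b ^ 2 * c * d := Real.sq_sqrt hΔ.le
  have hcd0 : 0 ≤ 4 * b ^ 2 * c * d := by positivity
  have hrle : r ≤ 1 - b * a := by nlinarith
  have hD : 0 < 1 - b * a + r := by linarith
  have hs1val : s1 = 2 * b * d / (1 - b * a + r) := rfl
  clear_value s1 r
  have hba : 0 < b * a := by positivity
  have hmul : s1 * (1 - b * a + r) = 2 * b * d := by
    rw [hs1val]; field_simp
  have h2 : (1 - b * a - r) * (1 - b * a + r) = 4 * b ^ 2 * c * d := by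
    linear_combination (-1 : ℝ) * hr2
  have hk : b * c * s1 = (1 - b * a - r) / 2 := by
    have h3 : b * c * s1 * (1 - b * a + r) = (1 - b * a - r) / 2 * (1 - b * a + r) := by
      linear_combination b * c * hmul - h2 / 2
    exact mul_right_cancel₀ (ne_of_gt hD) h3
  have hden1 : b * c * s1 < 1 := by linarith
  have hs1nonneg : 0 ≤ s1 := by rw [hs1val]; positivity
  have hfix : s1 * (1 - b * c * s1) = b * d + b * a * s1 := by
    linear_combination (-s1) * hk + hmul / 2
  -- invariant
  have key : ∀ i, 0 ≤ s i ∧ s i ≤ s1 ∧ s i ≤ s (i + 1) := by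
    intro i
    induction i with
    | zero =>
      refine ⟨le_of_eq h0.symm, by rw [h0]; exact hs1nonneg, ?_⟩
      rw [h0, hrec 0, h0]
      simp only [mul_zero, sub_zero, add_zero, div_one]
      positivity
    | succ n ih =>
      obtain ⟨h0n, h1n, h2n⟩ := ih
      have hbcx : b * c * s n ≤ b * c * s1 := by
        apply mul_le_mul_of_nonneg_left h1n; positivity
      have hden : 0 < 1 - b * c * s n := by linarith
      have hx1 : s (n + 1) = (b * d + b * a * s n) / (1 - b * c * s n) := hrec n
      have hnum : 0 ≤ b * d + b * a * s n := by positivity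
      have hge0 : 0 ≤ s (n + 1) := by rw [hx1]; exact div_nonneg hnum hden.le
      have hle1 : s (n + 1) ≤ s1 := by
        rw [hx1, div_le_iff₀ hden]
        nlinarith [hfix, mul_nonneg (sub_nonneg.2 h1n) (show (0:ℝ) ≤ b * c * s1 + b * a by positivity)]
      refine ⟨hge0, hle1, ?_⟩
      have hfac : b * c * (s (n + 1) + s1) ≤ 1 - b * a - r := by
        have : b * c * s (n + 1) ≤ b * c * s1 := by
          apply mul_le_mul_of_nonneg_left hle1; positivity
        nlinarith [hk]
      have hbcx2 : b * c * s (n + 1) ≤ b * c * s1 := by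
        apply mul_le_mul_of_nonneg_left hle1; positivity
      have hden2 : 0 < 1 - b * c * s (n + 1) := by linarith
      have hprod : 0 ≤ (s1 - s (n + 1)) * ((1 - b * a) - b * c * (s (n + 1) + s1)) :=
        mul_nonneg (sub_nonneg.2 hle1) (by linarith)
      rw [hrec (n + 1), le_div_iff₀ hden2]
      nlinarith [hfix, hprod]
  have hmono : Monotone s := monotone_nat_of_le_succ fun i => (key i).2.2
  have hden : ∀ i, 0 < 1 - b * c * s i := by
    intro i
    have : b * c * s i ≤ b * c * s1 := by
      apply mul_le_mul_of_nonneg_left (key i).2.1; positivity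
    linarith
  have hbdd : BddAbove (Set.range s) := ⟨s1, by rintro _ ⟨i, rfl⟩; exact (key i).2.1⟩
  have htend : Filter.Tendsto s Filter.atTop (nhds (⨆ i, s i)) :=
    tendsto_atTop_ciSup hmono hbdd
  set L : ℝ := ⨆ i, s i with hLdef
  have hL0 : 0 ≤ L := h0 ▸ le_ciSup hbdd 0
  have hL1 : L ≤ s1 := ciSup_le fun i => (key i).2.1
  have hdenL : 0 < 1 - b * c * L := by
    have : b * c * L ≤ b * c * s1 := by
      apply mul_le_mul_of_nonneg_left hL1; positivity
    linarith
  have htend2 : Filter.Tendsto (fun i => s (i + 1)) Filter.atTop (nhds L) :=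
    htend.comp (Filter.tendsto_add_atTop_nat 1)
  have htend3 : Filter.Tendsto (fun i => (b * d + b * a * s i) / (1 - b * c * s i))
      Filter.atTop (nhds ((b * d + b * a * L) / (1 - b * c * L))) := by
    apply Filter.Tendsto.div
    · exact tendsto_const_nhds.add (tendsto_const_nhds.mul htend)
    · exact tendsto_const_nhds.sub (tendsto_const_nhds.mul htend)
    · exact ne_of_gt hdenL
  have hLeq : L = (b * d + b * a * L) / (1 - b * c * L) := by
    refine tendsto_nhds_unique htend2 ?_
    have : (fun i => s (i + 1)) = fun i => (b * d + b * a * s i) / (1 - b * c * s i) :=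
      funext hrec
    rw [this]; exact htend3
  have hfixL : L * (1 - b * c * L) = b * d + b * a * L := by
    rw [eq_div_iff (ne_of_gt hdenL)] at hLeq; exact hLeq
  have hgL : (L - s1) * (b * c * (L + s1) - (1 - b * a)) = 0 := by
    linear_combination hfix - hfixL
  have hfac2 : b * c * (L + s1) - (1 - b * a) < 0 := by
    have : b * c * L ≤ b * c * s1 := by
      apply mul_le_mul_of_nonneg_left hL1; positivity
    nlinarith [hk]
  have hLs1 : L = s1 := by
    rcases mul_eq_zero.1 hgL with h | h
    · linarith [sub_eq_zero.1 h]
    · exact absurd h (ne_of_lt hfac2)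
  exact ⟨hmono, fun i => ⟨(key i).1, (key i).2.1, hden i⟩, hLs1 ▸ htend⟩
end

section
/- Let a, b, c, d ≥ 0 with ab < 1 and 4b²cd < (1-ab)². If a nonnegative sequence (kᵢ) satisfies k₀ = 0 and k_{i+1} ≤ (b d + b kᵢ a)/(1 - b kᵢ c) whenever b kᵢ c < 1, then kᵢ ≤ s₁* := 2bd/(1 - ba + sqrt((1-ba)² - 4b²cd)) for all i, and in particular b c kᵢ ≤ 2b²cd/(1 - ba + sqrt((1-ba)² - 4b²cd)) < (1 - ab)/2 < 1. -/
/-!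
The map `f t = (b d + b t a) / (1 - b t c)` is nondecreasing where its denominator is positive, and
its fixed points are the roots of `b c s² - (1 - b a) s + b d = 0`. The smaller root, written in
the rationalized form `s₁* = 2 b d / (1 - b a + √Δ)`, is nonnegative with `b c s₁* < 1`, so
`kᵢ ≤ s₁*` gives `kᵢ₊₁ ≤ f kᵢ ≤ f s₁* = s₁*`, and induction from `k₀ = 0` does the rest.
-/

section SmallRoot

variable {p q e : ℝ}

theorem mul_two_mul_div_add_sqrt_discrim (hΔ : 0 ≤ discrim q p e)
    (hpos : p + √(discrim q p e) ≠ 0) :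
    q * (2 * e / (p + √(discrim q p e))) = (p - √(discrim q p e)) / 2 := by
  have hr : √(discrim q p e) ^ 2 = p ^ 2 - 4 * q * e := by rw [Real.sq_sqrt hΔ, discrim]
  rw [mul_div_assoc', div_eq_div_iff hpos two_ne_zero]
  linear_combination hr

theorem two_mul_div_add_sqrt_discrim_mul_sub (hΔ : 0 ≤ discrim q p e)
    (hpos : p + √(discrim q p e) ≠ 0) :
    2 * e / (p + √(discrim q p e)) * (p - q * (2 * e / (p + √(discrim q p e)))) = e := by
  rw [mul_two_mul_div_add_sqrt_discrim hΔ hpos]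
  field_simp
  ring

end SmallRoot

section FixedPoint

variable {a b c d s : ℝ} (ha : 0 ≤ a) (hb : 0 ≤ b) (hc : 0 ≤ c) (hs : 0 ≤ s)
  (hfix : b * d + b * s * a = s * (1 - b * s * c)) (hsc : b * s * c < 1)
include ha hb hc hs hfix hsc

theorem div_le_of_le_fixedPoint {t : ℝ} (ht : t ≤ s) :
    (b * d + b * t * a) / (1 - b * t * c) ≤ s := by
  have hbtc : b * t * c ≤ b * s * c := by gcongr
  rw [div_le_iff₀ (by linarith)]
  -- by the fixed-point equation, `s (1 - b t c) - (b d + b t a) = (s - t) (b s c + b a)`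
  nlinarith [mul_nonneg (mul_nonneg (mul_nonneg hb hc) hs) (sub_nonneg.mpr ht),
    mul_nonneg (mul_nonneg hb ha) (sub_nonneg.mpr ht)]

theorem le_fixedPoint_of_rec {k : ℕ → ℝ} (h0 : k 0 ≤ s)
    (hrec : ∀ i, b * k i * c < 1 → k (i + 1) ≤ (b * d + b * k i * a) / (1 - b * k i * c)) :
    ∀ i, k i ≤ s := by
  intro i
  induction i with
  | zero => exact h0
  | succ i ih =>
    have hkc : b * k i * c < 1 := lt_of_le_of_lt (by gcongr) hsc
    exact (hrec i hkc).trans (div_le_of_le_fixedPoint ha hb hc hs hfix hsc ih)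

end FixedPoint

theorem stmt2_general (a b c d : ℝ) (ha : 0 ≤ a) (hb : 0 ≤ b) (hc : 0 ≤ c) (hd : 0 ≤ d)
    (hab : a * b < 1) (hcd : 4 * b ^ 2 * c * d < (1 - a * b) ^ 2)
    (k : ℕ → ℝ) (h0 : k 0 = 0)
    (hrec : ∀ i, b * k i * c < 1 →
      k (i + 1) ≤ (b * d + b * k i * a) / (1 - b * k i * c)) :
    let s1 : ℝ := 2 * b * d / (1 - b * a + Real.sqrt ((1 - b * a) ^ 2 - 4 * b ^ 2 * c * d))
    (∀ i, k i ≤ s1) ∧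
    (∀ i, b * c * k i ≤
        2 * b ^ 2 * c * d / (1 - b * a + Real.sqrt ((1 - b * a) ^ 2 - 4 * b ^ 2 * c * d))) ∧
    2 * b ^ 2 * c * d / (1 - b * a + Real.sqrt ((1 - b * a) ^ 2 - 4 * b ^ 2 * c * d))
      < (1 - a * b) / 2 ∧ (1 - a * b) / 2 < 1 := by
  intro s1
  set Δ := discrim (b * c) (1 - b * a) (b * d) with hΔ_def
  have hdisc : (1 - b * a) ^ 2 - 4 * b ^ 2 * c * d = Δ := by rw [hΔ_def, discrim]; ring
  have hΔ : 0 < Δ := by rw [← hdisc]; linarith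
  have hr : 0 < √Δ := Real.sqrt_pos.mpr hΔ
  have hden : 0 < 1 - b * a + √Δ := by linarith
  have hs1_def : s1 = 2 * (b * d) / (1 - b * a + √Δ) := by simp only [s1, hdisc]; ring
  have hs1 : 0 ≤ s1 := by rw [hs1_def]; positivity
  have hbcs1 : b * c * s1 = (1 - b * a - √Δ) / 2 :=
    hs1_def ▸ mul_two_mul_div_add_sqrt_discrim hΔ.le hden.ne'
  have hfix : b * d + b * s1 * a = s1 * (1 - b * s1 * c) := by
    have := two_mul_div_add_sqrt_discrim_mul_sub hΔ.le hden.ne'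
    rw [← hs1_def] at this
    linear_combination -this
  have hsc : b * s1 * c < 1 := by rw [mul_right_comm, hbcs1]; linarith [mul_nonneg hb ha]
  have hbound := le_fixedPoint_of_rec ha hb hc hs1 hfix hsc (h0 ▸ hs1) hrec
  have hs1_eq : 2 * b ^ 2 * c * d / (1 - b * a + √((1 - b * a) ^ 2 - 4 * b ^ 2 * c * d))
      = b * c * s1 := by simp only [s1]; ring
  refine ⟨hbound, fun i => hs1_eq ▸ mul_le_mul_of_nonneg_left (hbound i) (by positivity), ?_,
    by linarith [mul_nonneg ha hb]⟩
  rw [hs1_eq, hbcs1]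
  linarith

/-- Majorization: a nonnegative sequence `kᵢ` with `k₀ = 0` satisfying the
recursive inequality `k_{i+1} ≤ (b d + b kᵢ a)/(1 - b kᵢ c)` (whenever
`b kᵢ c < 1`) is bounded by the smaller fixed point `s₁*`, and
`b c kᵢ ≤ 2 b² c d / (1 - b a + √((1-ba)² - 4b²cd)) < (1 - a b)/2 < 1`. -/
theorem stmt2 (a b c d : ℝ) (ha : 0 ≤ a) (hb : 0 ≤ b) (hc : 0 ≤ c) (hd : 0 ≤ d)
    (hab : a * b < 1) (hcd : 4 * b ^ 2 * c * d < (1 - a * b) ^ 2)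
    (k : ℕ → ℝ) (hk : ∀ i, 0 ≤ k i) (h0 : k 0 = 0)
    (hrec : ∀ i, b * k i * c < 1 →
      k (i + 1) ≤ (b * d + b * k i * a) / (1 - b * k i * c)) :
    let s1 : ℝ := 2 * b * d / (1 - b * a + Real.sqrt ((1 - b * a) ^ 2 - 4 * b ^ 2 * c * d))
    (∀ i, k i ≤ s1) ∧
    (∀ i, b * c * k i ≤
        2 * b ^ 2 * c * d / (1 - b * a + Real.sqrt ((1 - b * a) ^ 2 - 4 * b ^ 2 * c * d))) ∧
    2 * b ^ 2 * c * d / (1 - b * a + Real.sqrt ((1 - b * a) ^ 2 - 4 * b ^ 2 * c * d))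
      < (1 - a * b) / 2 ∧ (1 - a * b) / 2 < 1 :=
  stmt2_general a b c d ha hb hc hd hab hcd k h0 hrec
end

section
/- Suppose y_t^{(0)} satisfies y_t^{(0)} = β exp(θ x_{t+1}^{(0)}) (1 + y_{t+1}^{(0)}) for all t ≥ 0, where x_t^{(0)} = x̄ + ρᵗ(x₀ - x̄) with |ρ| < 1, 0 < β, and β exp(θ x̄) < 1, and suppose y_t^{(0)} is bounded. Then y_t^{(0)} = ∑_{i=1}^{∞} βⁱ exp(θ [x̄ i + (ρ(1-ρⁱ)/(1-ρ))(x_t^{(0)} - x̄)]). -/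
/-!
Unrolling the recursion `n` steps writes `y_t` as the `n`-th partial sum of the series plus the
remainder `(∏_{j<n} g_j) · y_{t+n}`, where `g_j = β exp(θ x_{t+j+1})`. Since `x_t → x̄`,
the factors `g_j` tend to `β exp(θ x̄) < 1`, so their partial products tend to `0`, and
boundedness of `y` kills the remainder. The closed form of the summands is the geometric sum of
the AR(1) deviations `x_{t+j+1} - x̄ = ρ^{j+1} (x_t - x̄)`.
-/

open Finset Filter Topology

theorem eq_sum_add_prod_mul_of_forward_rec {R : Type*} [CommRing R] {g y : ℕ → R}
    (hrec : ∀ n, y n = g n * (1 + y (n + 1))) (n : ℕ) :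
    y 0 = ∑ i ∈ range n, ∏ j ∈ range (i + 1), g j + (∏ j ∈ range n, g j) * y n := by
  induction n with
  | zero => simp
  | succ n ih =>
    rw [ih, hrec n, sum_range_succ, prod_range_succ]
    ring

theorem tendsto_prod_range_nhds_zero {g : ℕ → ℝ} {L : ℝ} (hg : Tendsto g atTop (𝓝 L))
    (hL : |L| < 1) : Tendsto (fun n => ∏ j ∈ range n, g j) atTop (𝓝 0) := by
  obtain ⟨r, hLr, hr1⟩ := exists_between hL
  have hratio :
      ∀ᶠ n in atTop, ‖∏ j ∈ range (n + 1), g j‖ ≤ r * ‖∏ j ∈ range n, g j‖ := by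
    filter_upwards [hg.abs.eventually (gt_mem_nhds hLr)] with n hn
    rw [prod_range_succ, norm_mul, mul_comm r]
    exact mul_le_mul_of_nonneg_left hn.le (norm_nonneg _)
  exact (summable_of_ratio_norm_eventually_le hr1 hratio).tendsto_atTop_zero

theorem hasSum_prod_of_forward_rec {g y : ℕ → ℝ} {L : ℝ} (hg0 : ∀ n, 0 ≤ g n)
    (hg : Tendsto g atTop (𝓝 L)) (hL : |L| < 1) (hbdd : ∃ M, ∀ n, |y n| ≤ M)
    (hrec : ∀ n, y n = g n * (1 + y (n + 1))) :
    HasSum (fun i => ∏ j ∈ range (i + 1), g j) (y 0) := by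
  obtain ⟨M, hM⟩ := hbdd
  have hprod := tendsto_prod_range_nhds_zero hg hL
  have hrem : Tendsto (fun n => (∏ j ∈ range n, g j) * y n) atTop (𝓝 0) := by
    refine squeeze_zero_norm (fun n => ?_) (by simpa using hprod.mul_const M)
    rw [norm_mul, Real.norm_of_nonneg (prod_nonneg fun j _ => hg0 j)]
    exact mul_le_mul_of_nonneg_left (hM n) (prod_nonneg fun j _ => hg0 j)
  rw [hasSum_iff_tendsto_nat_of_nonneg (fun i => prod_nonneg fun j _ => hg0 j)]
  have hpartial : ∀ n, ∑ i ∈ range n, ∏ j ∈ range (i + 1), g j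
      = y 0 - (∏ j ∈ range n, g j) * y n := fun n => by
    rw [eq_sum_add_prod_mul_of_forward_rec hrec n]
    ring
  simpa [hpartial] using tendsto_const_nhds.sub hrem

variable {x : ℕ → ℝ} {xbar x0 ρ : ℝ}

theorem ar1_shift (hx : ∀ t, x t = xbar + ρ ^ t * (x0 - xbar)) (t j : ℕ) :
    x (t + j + 1) = xbar + ρ ^ (j + 1) * (x t - xbar) := by
  rw [hx, hx, pow_succ, pow_add]
  ring

theorem ar1_sum_range (hx : ∀ t, x t = xbar + ρ ^ t * (x0 - xbar)) (hρ : ρ ≠ 1) (t n : ℕ) :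
    ∑ j ∈ range n, x (t + j + 1) = xbar * n + ρ * (1 - ρ ^ n) / (1 - ρ) * (x t - xbar) := by
  have hgeom : ∑ j ∈ range n, ρ ^ (j + 1) = ρ * (1 - ρ ^ n) / (1 - ρ) := by
    simp_rw [pow_succ', ← mul_sum, geom_sum_eq hρ, mul_div_assoc,
      ← neg_div_neg_eq (ρ ^ n - 1), neg_sub]
  simp_rw [ar1_shift hx t, sum_add_distrib, ← sum_mul, hgeom, sum_const, card_range, nsmul_eq_mul]
  ring

theorem ar1_tendsto (hx : ∀ t, x t = xbar + ρ ^ t * (x0 - xbar)) (hρ : |ρ| < 1) :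
    Tendsto x atTop (𝓝 xbar) := by
  have h := (tendsto_pow_atTop_nhds_zero_of_abs_lt_one hρ).mul_const (x0 - xbar)
  simpa [← hx] using h.const_add xbar

/-- A bounded sequence `y_t` satisfying `y_t = β exp(θ x_{t+1})(1 + y_{t+1})`,
with `x_t = x̄ + ρᵗ(x₀ - x̄)`, `|ρ| < 1`, `β > 0`, `β exp(θ x̄) < 1`,
is given by the series `y_t = ∑_{i≥1} βⁱ exp(θ[x̄ i + ρ(1-ρⁱ)/(1-ρ)·(x_t - x̄)])`. -/
theorem stmt9 (β θ xbar x0 ρ : ℝ) (hβ : 0 < β) (hρ : |ρ| < 1)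
    (hstab : β * Real.exp (θ * xbar) < 1)
    (x : ℕ → ℝ) (hx : ∀ t, x t = xbar + ρ ^ t * (x0 - xbar))
    (y : ℕ → ℝ) (hbdd : ∃ M, ∀ t, |y t| ≤ M)
    (hrec : ∀ t, y t = β * Real.exp (θ * x (t + 1)) * (1 + y (t + 1))) :
    ∀ t, y t = ∑' i : ℕ,
      β ^ (i + 1) * Real.exp (θ * (xbar * (i + 1) +
        ρ * (1 - ρ ^ (i + 1)) / (1 - ρ) * (x t - xbar))) := by
  intro t
  set g : ℕ → ℝ := fun j => β * Real.exp (θ * x (t + j + 1))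
  have hg : Tendsto g atTop (𝓝 (β * Real.exp (θ * xbar))) := by
    have hxt : Tendsto (fun j => x (t + j + 1)) atTop (𝓝 xbar) :=
      (ar1_tendsto hx hρ).comp <|
        tendsto_atTop_mono (fun j => show j ≤ t + j + 1 by omega) tendsto_id
    exact ((Real.continuous_exp.tendsto _).comp (hxt.const_mul θ)).const_mul β
  have hsum : HasSum (fun i => ∏ j ∈ range (i + 1), g j) (y t) :=
    hasSum_prod_of_forward_rec (y := fun n => y (t + n))
      (fun n => by positivity) hg (by rwa [abs_of_pos (by positivity)])
      (hbdd.imp fun M hM n => hM _) fun n => hrec (t + n)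
  rw [← hsum.tsum_eq]
  refine tsum_congr fun i => ?_
  rw [prod_mul_distrib, prod_const, card_range, ← Real.exp_sum, ← mul_sum,
    ar1_sum_range hx (abs_lt.1 hρ).2.ne]
  push_cast
  ring_nf
end

section
/- Consider the exact Burnside solution y_t = ∑_{i=1}^{∞} βⁱ exp(a_i + b_i (x_t - x̄)) with a_i = θx̄ i + (1/2)(θσ/(1-ρ))² [i - 2ρ(1-ρⁱ)/(1-ρ) + ρ²(1-ρ^{2i})/(1-ρ²)] and b_i = θρ(1-ρⁱ)/(1-ρ). If |ρ| < 1 and β exp(θx̄ + (θσ/(1-ρ))²/2) < 1, then the series converges for every x_t ∈ ℝ. -/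
/-- The Burnside series `∑_{i≥1} βⁱ exp(aᵢ + bᵢ (x - x̄))` with
`aᵢ = θx̄ i + (1/2)(θσ/(1-ρ))² [i - 2ρ(1-ρⁱ)/(1-ρ) + ρ²(1-ρ^{2i})/(1-ρ²)]` and
`bᵢ = θρ(1-ρⁱ)/(1-ρ)` converges for every `x ∈ ℝ` provided `|ρ| < 1` and
`β exp(θx̄ + (θσ/(1-ρ))²/2) < 1`. -/
theorem stmt12 (β θ xbar σ ρ : ℝ) (hβ : 0 < β) (hσ : 0 < σ) (hρ : |ρ| < 1)
    (hconv : β * Real.exp (θ * xbar + (θ * σ / (1 - ρ)) ^ 2 / 2) < 1)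
    (a b : ℕ → ℝ)
    (ha : ∀ i, a i = θ * xbar * i + (1 / 2) * (θ * σ / (1 - ρ)) ^ 2 *
      (i - 2 * ρ * (1 - ρ ^ i) / (1 - ρ) + ρ ^ 2 * (1 - ρ ^ (2 * i)) / (1 - ρ ^ 2)))
    (hb : ∀ i, b i = θ * ρ * (1 - ρ ^ i) / (1 - ρ)) :
    ∀ x : ℝ, Summable (fun i : ℕ =>
      β ^ (i + 1) * Real.exp (a (i + 1) + b (i + 1) * (x - xbar))) := by
  intro x
  set K : ℝ := (θ * σ / (1 - ρ)) ^ 2 with hK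
  set r : ℝ := β * Real.exp (θ * xbar + K / 2) with hr
  have hr0 : 0 ≤ r := le_of_lt (mul_pos hβ (Real.exp_pos _))
  have hr1 : r < 1 := hconv
  set c1 : ℝ := θ * ρ * (x - xbar) / (1 - ρ) - K * ρ / (1 - ρ) with hc1
  set c2 : ℝ := K / 2 * ρ ^ 2 / (1 - ρ ^ 2) with hc2
  set M : ℝ := 2 * |c1| + 2 * |c2| with hM
  clear_value K r c1 c2 M
  have habs : ∀ n : ℕ, |1 - ρ ^ n| ≤ 2 := by
    intro n
    have h1 : |ρ ^ n| ≤ 1 := by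
      rw [abs_pow]
      exact pow_le_one₀ (abs_nonneg ρ) (le_of_lt hρ)
    calc |1 - ρ ^ n| ≤ |(1:ℝ)| + |ρ ^ n| := abs_sub _ _
      _ ≤ 1 + 1 := by rw [abs_one]; linarith
      _ = 2 := by norm_num
  -- key bound on exponents
  have hbound : ∀ n : ℕ,
      a n + b n * (x - xbar) ≤ (θ * xbar + K / 2) * n + M := by
    intro n
    have hEq : a n + b n * (x - xbar) =
        (θ * xbar + K / 2) * n + c1 * (1 - ρ ^ n) + c2 * (1 - ρ ^ (2 * n)) := by
      rw [ha, hb, hc1, hc2, hK]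
      ring
    have h1 : c1 * (1 - ρ ^ n) ≤ 2 * |c1| := by
      calc c1 * (1 - ρ ^ n) ≤ |c1 * (1 - ρ ^ n)| := le_abs_self _
        _ = |c1| * |1 - ρ ^ n| := abs_mul _ _
        _ ≤ |c1| * 2 := mul_le_mul_of_nonneg_left (habs n) (abs_nonneg _)
        _ = 2 * |c1| := by ring
    have h2 : c2 * (1 - ρ ^ (2 * n)) ≤ 2 * |c2| := by
      calc c2 * (1 - ρ ^ (2 * n)) ≤ |c2 * (1 - ρ ^ (2 * n))| := le_abs_self _
        _ = |c2| * |1 - ρ ^ (2 * n)| := abs_mul _ _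
        _ ≤ |c2| * 2 := mul_le_mul_of_nonneg_left (habs (2 * n)) (abs_nonneg _)
        _ = 2 * |c2| := by ring
    rw [hEq, hM]
    have := add_le_add h1 h2
    linarith [this]
  have hterm : ∀ i : ℕ,
      β ^ (i + 1) * Real.exp (a (i + 1) + b (i + 1) * (x - xbar))
        ≤ Real.exp M * r ^ (i + 1) := by
    intro i
    set n : ℕ := i + 1
    have h1 : Real.exp (a n + b n * (x - xbar))
        ≤ Real.exp ((θ * xbar + K / 2) * n + M) := Real.exp_le_exp.mpr (hbound n)
    have h2 : β ^ n * Real.exp (a n + b n * (x - xbar))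
        ≤ β ^ n * Real.exp ((θ * xbar + K / 2) * n + M) :=
      mul_le_mul_of_nonneg_left h1 (pow_nonneg (le_of_lt hβ) n)
    have h3 : β ^ n * Real.exp ((θ * xbar + K / 2) * n + M)
        = Real.exp M * r ^ n := by
      rw [Real.exp_add, mul_comm ((θ * xbar + K / 2)) (n : ℝ),
        Real.exp_nat_mul, hr, mul_pow]
      ring
    calc β ^ n * Real.exp (a n + b n * (x - xbar))
        ≤ β ^ n * Real.exp ((θ * xbar + K / 2) * n + M) := h2
      _ = Real.exp M * r ^ n := h3
  have hgeom : Summable (fun i : ℕ => Real.exp M * r ^ (i + 1)) := by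
    have : Summable (fun i : ℕ => r ^ i) := summable_geometric_of_lt_one hr0 hr1
    have := (this.mul_left (Real.exp M * r))
    refine this.congr fun i => ?_
    rw [pow_succ]
    ring
  refine Summable.of_nonneg_of_le (fun i => ?_) (fun i => hterm i) hgeom
  exact mul_nonneg (pow_nonneg (le_of_lt hβ) _) (le_of_lt (Real.exp_pos _))
end

section
/- Let A, B, Aₜ, Bₜ (t ∈ ℕ) be n×n and m×m real matrices with all Bₜ invertible, a = sup_t ‖Aₜ‖ < 1 and b = sup_t ‖Bₜ⁻¹‖ < 1, and let Q₁₂,ₜ, Q₂₁,ₜ be matrices with c = sup_t ‖Q₁₂,ₜ‖, d = sup_t ‖Q₂₁,ₜ‖ satisfying cd < ((1-ab)/(2b))². Define, for fixed T, the backward recursion K_{T,T+1} = 0 and K_{T,T-i-1} = L_{T,T-i}⁻¹ (Q₂₁,T-i + K_{T,T-i} A_{T-i}) where L_{T,T-i} = B_{T-i} + K_{T,T-i} Q₁₂,T-i. Then for every i = 0,…,T the matrix L_{T,T-i} is invertible, the recursion is well defined, and ‖B_{T-i}⁻¹‖·‖K_{T,T-i+1}‖·‖Q₁₂,T-i‖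 ≤ (1-ab)/2 < 1. -/
/-!
The constant `s` is the smaller root of the scalar Riccati equation `b c s² - (1 - a b) s + b d = 0`,
i.e. `s = 2bd / (1 - ab + √((1 - ab)² - 4b²cd))`. The ball `‖K‖ ≤ s` is invariant under the backward
step: if `‖K‖ ≤ s`, then `L = B (1 + B⁻¹ K Q₁₂)` with `‖B⁻¹ K Q₁₂‖ ≤ b c s ≤ (1 - ab)/2 < 1`, so `L` is
invertible by a Neumann series with `‖L⁻¹‖ ≤ b / (1 - b c s)`, and then
`‖L⁻¹ (Q₂₁ + K A)‖ ≤ b (d + a s) / (1 - b c s) = s` by the choice of `s`.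
-/

open ContinuousLinearMap

/-- The root `(β - √(β² - 4αγ)) / (2α)` of `α x² - β x + γ`, in a rationalised form that
stays correct for `α = 0`. -/
noncomputable def quadSmallRoot (α β γ : ℝ) : ℝ :=
  2 * γ / (β + √(β ^ 2 - 4 * α * γ))

section quadSmallRoot

variable {α β γ : ℝ}

theorem quadSmallRoot_nonneg (hβ : 0 ≤ β) (hγ : 0 ≤ γ) : 0 ≤ quadSmallRoot α β γ := by
  unfold quadSmallRoot
  positivity

theorem quadSmallRoot_mul_add_sqrt (hβ : 0 < β) :
    quadSmallRoot α β γ * (β + √(β ^ 2 - 4 * α * γ)) = 2 * γ :=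
  div_mul_cancel₀ _ (by positivity)

theorem two_mul_mul_quadSmallRoot (hβ : 0 < β) (hΔ : 4 * α * γ ≤ β ^ 2) :
    2 * α * quadSmallRoot α β γ = β - √(β ^ 2 - 4 * α * γ) := by
  have hq := Real.sq_sqrt (sub_nonneg.2 hΔ)
  have hpos : 0 < β + √(β ^ 2 - 4 * α * γ) := by positivity
  refine mul_right_cancel₀ hpos.ne' ?_
  linear_combination 2 * α * quadSmallRoot_mul_add_sqrt (α := α) (γ := γ) hβ + hq

theorem quadSmallRoot_isRoot (hβ : 0 < β) (hΔ : 4 * α * γ ≤ β ^ 2) :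
    α * quadSmallRoot α β γ ^ 2 - β * quadSmallRoot α β γ + γ = 0 := by
  linear_combination (quadSmallRoot α β γ * two_mul_mul_quadSmallRoot hβ hΔ
    - quadSmallRoot_mul_add_sqrt (α := α) (γ := γ) hβ) / 2

end quadSmallRoot

theorem isUnit_add_and_norm_inverse_le {R : Type*} [NormedRing R] [HasSummableGeomSeries R]
    (hR : ‖(1 : R)‖ ≤ 1) (u : Rˣ) (p : R) (hp : ‖(↑u⁻¹ : R)‖ * ‖p‖ < 1) :
    IsUnit (↑u + p) ∧
      ‖Ring.inverse (↑u + p)‖ ≤ ‖(↑u⁻¹ : R)‖ / (1 - ‖(↑u⁻¹ : R)‖ * ‖p‖) := by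
  have ht_le : ‖-((↑u⁻¹ : R) * p)‖ ≤ ‖(↑u⁻¹ : R)‖ * ‖p‖ := (norm_neg _).trans_le (norm_mul_le _ _)
  have ht : ‖-((↑u⁻¹ : R) * p)‖ < 1 := ht_le.trans_lt hp
  set v := Units.oneSub _ ht
  have huv : ↑(u * v) = ↑u + p := by simp [v, mul_add]
  refine ⟨huv ▸ (u * v).isUnit, ?_⟩
  have hv : ‖(↑v⁻¹ : R)‖ ≤ (1 - ‖(↑u⁻¹ : R)‖ * ‖p‖)⁻¹ := calc
    ‖(↑v⁻¹ : R)‖ ≤ ‖(1 : R)‖ - 1 + (1 - ‖-((↑u⁻¹ : R) * p)‖)⁻¹ :=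
        tsum_geometric_le_of_norm_lt_one _ ht
    _ ≤ (1 - ‖(↑u⁻¹ : R)‖ * ‖p‖)⁻¹ := by
      have : (1 - ‖-((↑u⁻¹ : R) * p)‖)⁻¹ ≤ (1 - ‖(↑u⁻¹ : R)‖ * ‖p‖)⁻¹ := by
        gcongr
      linarith
  calc ‖Ring.inverse (↑u + p)‖ = ‖(↑v⁻¹ : R) * ↑u⁻¹‖ := by
        rw [← huv, Ring.inverse_unit, mul_inv_rev, Units.val_mul]
    _ ≤ (1 - ‖(↑u⁻¹ : R)‖ * ‖p‖)⁻¹ * ‖(↑u⁻¹ : R)‖ :=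
        (norm_mul_le _ _).trans (by gcongr)
    _ = ‖(↑u⁻¹ : R)‖ / (1 - ‖(↑u⁻¹ : R)‖ * ‖p‖) := by ring

section BackwardRecursion

variable {𝕜 E F : Type*} [NontriviallyNormedField 𝕜]
  [NormedAddCommGroup E] [NormedSpace 𝕜 E] [NormedAddCommGroup F] [NormedSpace 𝕜 F] [CompleteSpace F]

theorem isUnit_and_norm_backwardStep_le {a b c d s : ℝ} {B Binv : F →L[𝕜] F} {A : E →L[𝕜] E}
    {Q12 : F →L[𝕜] E} {Q21 K : E →L[𝕜] F} (hBinv : B ∘L Binv = 1 ∧ Binv ∘L B = 1)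
    (hA : ‖A‖ ≤ a) (hB : ‖Binv‖ ≤ b) (hQ12 : ‖Q12‖ ≤ c) (hQ21 : ‖Q21‖ ≤ d) (hK : ‖K‖ ≤ s)
    (hsmall : b * c * s < 1) (hquad : b * c * s ^ 2 + b * d ≤ (1 - a * b) * s) :
    IsUnit (B + K ∘L Q12) ∧ ‖Ring.inverse (B + K ∘L Q12) ∘L (Q21 + K ∘L A)‖ ≤ s := by
  let u : (F →L[𝕜] F)ˣ := ⟨B, Binv, hBinv.1, hBinv.2⟩
  have hKQ : ‖K ∘L Q12‖ ≤ s * c :=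
    (opNorm_comp_le _ _).trans (mul_le_mul hK hQ12 (norm_nonneg _) ((norm_nonneg _).trans hK))
  have hBKQ : ‖Binv‖ * ‖K ∘L Q12‖ ≤ b * c * s := by
    have := mul_le_mul hB hKQ (norm_nonneg _) ((norm_nonneg _).trans hB)
    linarith
  obtain ⟨hL, hLinv⟩ : IsUnit (B + K ∘L Q12) ∧
      ‖Ring.inverse (B + K ∘L Q12)‖ ≤ ‖Binv‖ / (1 - ‖Binv‖ * ‖K ∘L Q12‖) :=
    isUnit_add_and_norm_inverse_le norm_id_le u (K ∘L Q12) (hBKQ.trans_lt hsmall)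
  refine ⟨hL, ?_⟩
  have hLinv' : ‖Ring.inverse (B + K ∘L Q12)‖ ≤ b / (1 - b * c * s) :=
    hLinv.trans (div_le_div₀ ((norm_nonneg _).trans hB) hB (sub_pos.2 hsmall) (by linarith))
  have hrhs : ‖Q21 + K ∘L A‖ ≤ d + s * a :=
    (norm_add_le _ _).trans (add_le_add hQ21
      ((opNorm_comp_le _ _).trans (mul_le_mul hK hA (norm_nonneg _) ((norm_nonneg _).trans hK))))
  calc ‖Ring.inverse (B + K ∘L Q12) ∘L (Q21 + K ∘L A)‖
      ≤ b / (1 - b * c * s) * (d + s * a) :=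
        (opNorm_comp_le _ _).trans
          (mul_le_mul hLinv' hrhs (norm_nonneg _) ((norm_nonneg _).trans hLinv'))
    _ ≤ s := by
        rw [div_mul_eq_mul_div, div_le_iff₀ (sub_pos.2 hsmall)]
        linear_combination hquad

noncomputable def backwardGain (A : ℕ → E →L[𝕜] E) (B : ℕ → F →L[𝕜] F)
    (Q12 : ℕ → F →L[𝕜] E) (Q21 : ℕ → E →L[𝕜] F) (T : ℕ) : ℕ → E →L[𝕜] F
  | 0 => 0
  | j + 1 =>
    Ring.inverse (B (T - j) + backwardGain A B Q12 Q21 T j ∘L Q12 (T - j)) ∘L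
      (Q21 (T - j) + backwardGain A B Q12 Q21 T j ∘L A (T - j))

theorem norm_backwardGain_le {a b c d s : ℝ} {A : ℕ → E →L[𝕜] E} {B Binv : ℕ → F →L[𝕜] F}
    {Q12 : ℕ → F →L[𝕜] E} {Q21 : ℕ → E →L[𝕜] F} (hBinv : ∀ t, B t ∘L Binv t = 1 ∧ Binv t ∘L B t = 1)
    (hA : ∀ t, ‖A t‖ ≤ a) (hB : ∀ t, ‖Binv t‖ ≤ b) (hQ12 : ∀ t, ‖Q12 t‖ ≤ c)
    (hQ21 : ∀ t, ‖Q21 t‖ ≤ d) (hs : 0 ≤ s) (hsmall : b * c * s < 1)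
    (hquad : b * c * s ^ 2 + b * d ≤ (1 - a * b) * s) (T : ℕ) :
    ∀ i, ‖backwardGain A B Q12 Q21 T i‖ ≤ s
  | 0 => by simpa [backwardGain] using hs
  | j + 1 => (isUnit_and_norm_backwardStep_le (hBinv _) (hA _) (hB _) (hQ12 _)
      (hQ21 _) (norm_backwardGain_le hBinv hA hB hQ12 hQ21 hs hsmall hquad T j) hsmall hquad).2

end BackwardRecursion

/-- `K i` stands for the paper's `K_{T,T+1-i}`. -/
theorem stmt13 (n m : ℕ) (a b c d : ℝ)
    (A : ℕ → (EuclideanSpace ℝ (Fin n) →L[ℝ] EuclideanSpace ℝ (Fin n)))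
    (B Binv : ℕ → (EuclideanSpace ℝ (Fin m) →L[ℝ] EuclideanSpace ℝ (Fin m)))
    (Q12 : ℕ → (EuclideanSpace ℝ (Fin m) →L[ℝ] EuclideanSpace ℝ (Fin n)))
    (Q21 : ℕ → (EuclideanSpace ℝ (Fin n) →L[ℝ] EuclideanSpace ℝ (Fin m)))
    (hBinv : ∀ t, B t ∘L Binv t = 1 ∧ Binv t ∘L B t = 1)
    (hA : ∀ t, ‖A t‖ ≤ a) (hB : ∀ t, ‖Binv t‖ ≤ b)
    (hQ12 : ∀ t, ‖Q12 t‖ ≤ c) (hQ21 : ∀ t, ‖Q21 t‖ ≤ d)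
    (ha1 : a < 1) (hb0 : 0 < b) (hb1 : b < 1)
    (hcd : c * d < ((1 - a * b) / (2 * b)) ^ 2) (T : ℕ) :
    ∃ K : ℕ → (EuclideanSpace ℝ (Fin n) →L[ℝ] EuclideanSpace ℝ (Fin m)),
      K 0 = 0 ∧
      (∀ i ≤ T,
        IsUnit (B (T - i) + K i ∘L Q12 (T - i)) ∧
        K (i + 1) =
          (Ring.inverse (B (T - i) + K i ∘L Q12 (T - i))) ∘L
            (Q21 (T - i) + K i ∘L A (T - i)) ∧
        ‖Binv (T - i)‖ * ‖K i‖ * ‖Q12 (T - i)‖ ≤ (1 - a * b) / 2) ∧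
      (1 - a * b) / 2 < 1 := by
  have ha0 : 0 ≤ a := (norm_nonneg _).trans (hA 0)
  have hc0 : 0 ≤ c := (norm_nonneg _).trans (hQ12 0)
  have hd0 : 0 ≤ d := (norm_nonneg _).trans (hQ21 0)
  have hab : 0 ≤ a * b := by positivity
  have he : 0 < 1 - a * b := by nlinarith
  have hΔ : 4 * (b * c) * (b * d) ≤ (1 - a * b) ^ 2 := by
    rw [div_pow, lt_div_iff₀ (by positivity)] at hcd
    linarith
  set s := quadSmallRoot (b * c) (1 - a * b) (b * d)
  have hs : 0 ≤ s := quadSmallRoot_nonneg he.le (by positivity)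
  have hbcs : b * c * s ≤ (1 - a * b) / 2 := by
    have := two_mul_mul_quadSmallRoot he hΔ
    linarith [Real.sqrt_nonneg ((1 - a * b) ^ 2 - 4 * (b * c) * (b * d))]
  have hsmall : b * c * s < 1 := by linarith
  have hquad : b * c * s ^ 2 + b * d ≤ (1 - a * b) * s := by
    linear_combination quadSmallRoot_isRoot he hΔ
  have hK := norm_backwardGain_le hBinv hA hB hQ12 hQ21 hs hsmall hquad T
  refine ⟨backwardGain A B Q12 Q21 T, rfl, fun i _ => ⟨?_, rfl, ?_⟩, by linarith⟩
  · exact (isUnit_and_norm_backwardStep_le (hBinv _) (hA (T - i)) (hB _) (hQ12 _)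
      (hQ21 (T - i)) (hK i) hsmall hquad).1
  · calc ‖Binv (T - i)‖ * ‖backwardGain A B Q12 Q21 T i‖ * ‖Q12 (T - i)‖ ≤ b * s * c := by
          gcongr
          exacts [hB _, hK i, hQ12 _]
      _ ≤ (1 - a * b) / 2 := by linarith
end

section
/- Under the hypotheses of the backward recursion (a = sup‖Aₜ‖, b = sup‖Bₜ⁻¹‖, ab < 1, and cd < ((1-ab)/(2b))² for c = sup‖Q₁₂,ₜ‖, d = sup‖Q₂₁,ₜ‖), for every T and j ≤ T+1 the difference of successive-horizon recursion matrices satisfies the contraction estimate ‖K_{T,j} - K_{T+1,j}‖ ≤ ‖K_{T,T+1} - K_{T+1,T+1}‖ = ‖B_{T+2}⁻¹ Q₂₁,T+2‖ ≤ b·‖Q₂₁,T+2‖. -/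
open ContinuousLinearMap
set_option maxHeartbeats 1000000

lemma sfacts (a b c d : ℝ) (ha0 : 0 ≤ a) (hb0 : 0 < b) (hc : 0 ≤ c) (hd : 0 ≤ d)
    (hab : a * b < 1) (hcd : c * d < ((1 - a * b) / (2 * b)) ^ 2) :
    ∃ s : ℝ, 0 ≤ s ∧ b * d ≤ s ∧ b * c * s ≤ (1 - a * b) / 2 ∧
      b * (d + a * s) ≤ (1 - b * c * s) * s := by
  have hcd' : c * d * (2 * b) ^ 2 < (1 - a * b) ^ 2 := by
    rw [div_pow] at hcd
    exact (lt_div_iff₀ (by positivity)).mp hcd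
  have hΔ : 0 < (1 - a * b) ^ 2 - 4 * b ^ 2 * (c * d) := by nlinarith
  obtain ⟨r, hrdef⟩ : ∃ r : ℝ, r = Real.sqrt ((1 - a * b) ^ 2 - 4 * b ^ 2 * (c * d)) := ⟨_, rfl⟩
  have hr2 : r ^ 2 = (1 - a * b) ^ 2 - 4 * b ^ 2 * (c * d) := by rw [hrdef]; exact Real.sq_sqrt hΔ.le
  have hr0 : 0 < r := by rw [hrdef]; exact Real.sqrt_pos.mpr hΔ
  have habe : 0 ≤ a * b := mul_nonneg ha0 hb0.le
  have hre : r ≤ 1 - a * b := by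
    nlinarith [mul_nonneg (mul_nonneg hc hd) (sq_nonneg b)]
  have hD : 0 < (1 - a * b) + r := by linarith
  obtain ⟨s, hsdef⟩ : ∃ s : ℝ, s = 2 * b * d / ((1 - a * b) + r) := ⟨_, rfl⟩
  have hs0 : 0 ≤ s := by rw [hsdef]; positivity
  have h1 : s * ((1 - a * b) + r) = 2 * b * d := by rw [hsdef]; exact div_mul_cancel₀ _ hD.ne'
  have h2 : b * c * s = ((1 - a * b) - r) / 2 := by
    have h3 : (b * c * s) * ((1 - a * b) + r) = (((1 - a * b) - r) / 2) * ((1 - a * b) + r) := by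
      have h4 : b * c * s * ((1 - a * b) + r) = b * c * (s * ((1 - a * b) + r)) := by ring
      rw [h4, h1]
      linear_combination (1/2 : ℝ) * hr2
    exact mul_right_cancel₀ hD.ne' h3
  refine ⟨s, hs0, ?_, ?_, ?_⟩
  · rw [hsdef, le_div_iff₀ hD]
    nlinarith [mul_nonneg hb0.le hd]
  · rw [h2]; linarith
  · rw [h2]
    have heq : b * (d + a * s) = (1 - ((1 - a * b) - r) / 2) * s := by
      linear_combination (-1/2 : ℝ) * h1
    linarith [heq.le]


lemma solveB {n m : ℕ}
    (B Binv : EuclideanSpace ℝ (Fin m) →L[ℝ] EuclideanSpace ℝ (Fin m))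
    (hInv : Binv ∘L B = 1)
    (P : EuclideanSpace ℝ (Fin m) →L[ℝ] EuclideanSpace ℝ (Fin m))
    (X Y : EuclideanSpace ℝ (Fin n) →L[ℝ] EuclideanSpace ℝ (Fin m))
    (h : (B + P) ∘L X = Y) : X = Binv ∘L (Y - P ∘L X) := by
  have h1 : X + (Binv ∘L P) ∘L X = Binv ∘L Y := by
    rw [← h, ← ContinuousLinearMap.comp_assoc, ContinuousLinearMap.comp_add, hInv,
      ContinuousLinearMap.add_comp, ContinuousLinearMap.one_def,
      ContinuousLinearMap.id_comp]
  rw [ContinuousLinearMap.comp_sub, ← ContinuousLinearMap.comp_assoc]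
  exact eq_sub_of_add_eq h1

lemma normbd {n m : ℕ} (a b c d s : ℝ)
    (hb0 : 0 < b) (hs0 : 0 ≤ s) (hc : 0 ≤ c)
    (hab0 : 0 ≤ a * b) (hbcs : b * c * s ≤ (1 - a * b) / 2) (hab : a * b < 1)
    (hq : b * (d + a * s) ≤ (1 - b * c * s) * s)
    (A : EuclideanSpace ℝ (Fin n) →L[ℝ] EuclideanSpace ℝ (Fin n))
    (B Binv : EuclideanSpace ℝ (Fin m) →L[ℝ] EuclideanSpace ℝ (Fin m))
    (hInv : Binv ∘L B = 1) (hBn : ‖Binv‖ ≤ b)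
    (Q12 : EuclideanSpace ℝ (Fin m) →L[ℝ] EuclideanSpace ℝ (Fin n))
    (Q21 : EuclideanSpace ℝ (Fin n) →L[ℝ] EuclideanSpace ℝ (Fin m))
    (hA : ‖A‖ ≤ a) (hQ12n : ‖Q12‖ ≤ c) (hQ21n : ‖Q21‖ ≤ d)
    (Kt Kp : EuclideanSpace ℝ (Fin n) →L[ℝ] EuclideanSpace ℝ (Fin m))
    (hKt : ‖Kt‖ ≤ s)
    (eq1 : (B + Kt ∘L Q12) ∘L Kp = Q21 + Kt ∘L A) :
    ‖Kp‖ ≤ s := by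
  have ha0 : 0 ≤ a := le_trans (norm_nonneg _) hA
  have hd0 : 0 ≤ d := le_trans (norm_nonneg _) hQ21n
  have hrep := solveB B Binv hInv (Kt ∘L Q12) Kp (Q21 + Kt ∘L A) eq1
  have hKQ : ‖Kt ∘L Q12‖ ≤ s * c :=
    (opNorm_comp_le _ _).trans (mul_le_mul hKt hQ12n (norm_nonneg _) hs0)
  have hY : ‖Q21 + Kt ∘L A - (Kt ∘L Q12) ∘L Kp‖ ≤ d + s * a + s * c * ‖Kp‖ := by
    refine (norm_sub_le _ _).trans ?_
    have t1 : ‖Q21 + Kt ∘L A‖ ≤ d + s * a :=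
      (norm_add_le _ _).trans (by
        gcongr
        exact (opNorm_comp_le _ _).trans (mul_le_mul hKt hA (norm_nonneg _) hs0))
    have t2 : ‖(Kt ∘L Q12) ∘L Kp‖ ≤ s * c * ‖Kp‖ :=
      (opNorm_comp_le _ _).trans (mul_le_mul_of_nonneg_right hKQ (norm_nonneg _))
    linarith
  have e1 : ‖Kp‖ ≤ b * (d + s * a + s * c * ‖Kp‖) := by
    conv_lhs => rw [hrep]
    exact (opNorm_comp_le _ _).trans
      (mul_le_mul hBn hY (norm_nonneg _) (le_trans (norm_nonneg _) hBn))
  nlinarith [norm_nonneg Kp]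

lemma stepLem {n m : ℕ} (a b c d s : ℝ)
    (hb0 : 0 < b) (hs0 : 0 ≤ s) (hc : 0 ≤ c)
    (hab0 : 0 ≤ a * b) (hbcs : b * c * s ≤ (1 - a * b) / 2) (hab : a * b < 1)
    (hq : b * (d + a * s) ≤ (1 - b * c * s) * s)
    (A : EuclideanSpace ℝ (Fin n) →L[ℝ] EuclideanSpace ℝ (Fin n))
    (B Binv : EuclideanSpace ℝ (Fin m) →L[ℝ] EuclideanSpace ℝ (Fin m))
    (hInv : Binv ∘L B = 1) (hBn : ‖Binv‖ ≤ b)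
    (Q12 : EuclideanSpace ℝ (Fin m) →L[ℝ] EuclideanSpace ℝ (Fin n))
    (Q21 : EuclideanSpace ℝ (Fin n) →L[ℝ] EuclideanSpace ℝ (Fin m))
    (hA : ‖A‖ ≤ a) (hQ12n : ‖Q12‖ ≤ c) (hQ21n : ‖Q21‖ ≤ d)
    (Kt K't Kp K'p : EuclideanSpace ℝ (Fin n) →L[ℝ] EuclideanSpace ℝ (Fin m))
    (hKt : ‖Kt‖ ≤ s) (hK't : ‖K't‖ ≤ s)
    (eq1 : (B + Kt ∘L Q12) ∘L Kp = Q21 + Kt ∘L A)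
    (eq2 : (B + K't ∘L Q12) ∘L K'p = Q21 + K't ∘L A) :
    ‖Kp‖ ≤ s ∧ ‖K'p‖ ≤ s ∧ ‖Kp - K'p‖ ≤ ‖Kt - K't‖ := by
  have ha0 : 0 ≤ a := le_trans (norm_nonneg _) hA
  have hd0 : 0 ≤ d := le_trans (norm_nonneg _) hQ21n
  have hKpb := normbd a b c d s hb0 hs0 hc hab0 hbcs hab hq A B Binv hInv hBn
    Q12 Q21 hA hQ12n hQ21n Kt Kp hKt eq1
  have hK'pb := normbd a b c d s hb0 hs0 hc hab0 hbcs hab hq A B Binv hInv hBn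
    Q12 Q21 hA hQ12n hQ21n K't K'p hK't eq2
  refine ⟨hKpb, hK'pb, ?_⟩
  -- key identity
  have e2' : B ∘L K'p = Q21 + K't ∘L A - (K't ∘L Q12) ∘L K'p := by
    rw [← eq2, ContinuousLinearMap.add_comp]; abel
  have key : (B + Kt ∘L Q12) ∘L (Kp - K'p) = (Kt - K't) ∘L (A - Q12 ∘L K'p) := by
    rw [ContinuousLinearMap.comp_sub, eq1, ContinuousLinearMap.add_comp, e2']
    simp only [ContinuousLinearMap.sub_comp, ContinuousLinearMap.comp_sub,
      ContinuousLinearMap.comp_assoc]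
    abel
  have hrep := solveB B Binv hInv (Kt ∘L Q12) (Kp - K'p) ((Kt - K't) ∘L (A - Q12 ∘L K'p)) key
  have hKQ : ‖Kt ∘L Q12‖ ≤ s * c :=
    (opNorm_comp_le _ _).trans (mul_le_mul hKt hQ12n (norm_nonneg _) hs0)
  have hAQ : ‖A - Q12 ∘L K'p‖ ≤ a + c * s := by
    refine (norm_sub_le _ _).trans ?_
    have : ‖Q12 ∘L K'p‖ ≤ c * s :=
      (opNorm_comp_le _ _).trans (mul_le_mul hQ12n hK'pb (norm_nonneg _) hc)
    linarith
  have hY : ‖(Kt - K't) ∘L (A - Q12 ∘L K'p) - (Kt ∘L Q12) ∘L (Kp - K'p)‖ ≤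
      ‖Kt - K't‖ * (a + c * s) + s * c * ‖Kp - K'p‖ := by
    refine (norm_sub_le _ _).trans ?_
    have t1 : ‖(Kt - K't) ∘L (A - Q12 ∘L K'p)‖ ≤ ‖Kt - K't‖ * (a + c * s) :=
      (opNorm_comp_le _ _).trans (mul_le_mul_of_nonneg_left hAQ (norm_nonneg _))
    have t2 : ‖(Kt ∘L Q12) ∘L (Kp - K'p)‖ ≤ s * c * ‖Kp - K'p‖ :=
      (opNorm_comp_le _ _).trans (mul_le_mul_of_nonneg_right hKQ (norm_nonneg _))
    linarith
  have e1 : ‖Kp - K'p‖ ≤ b * (‖Kt - K't‖ * (a + c * s) + s * c * ‖Kp - K'p‖) := by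
    conv_lhs => rw [hrep]
    exact (opNorm_comp_le _ _).trans
      (mul_le_mul hBn hY (norm_nonneg _) (le_trans (norm_nonneg _) hBn))
  nlinarith [norm_nonneg (Kp - K'p), norm_nonneg (Kt - K't)]


/-- Contraction estimate between successive-horizon backward recursions:
if `K j = K_{T,j}` (terminal `K (T+1) = 0`) and `K' j = K_{T+1,j}`
(terminal `K' (T+2) = 0`) both satisfy
`(B_t + K_t Q₁₂,t) K_{t-1} = Q₂₁,t + K_t A_t`, then for all `j ≤ T+1`
`‖K j - K' j‖ ≤ ‖K (T+1) - K' (T+1)‖ = ‖B_{T+2}⁻¹ Q₂₁,T+2‖ ≤ b ‖Q₂₁,T+2‖`. -/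
theorem stmt14 (n m : ℕ) (a b c d : ℝ)
    (A : ℕ → (EuclideanSpace ℝ (Fin n) →L[ℝ] EuclideanSpace ℝ (Fin n)))
    (B Binv : ℕ → (EuclideanSpace ℝ (Fin m) →L[ℝ] EuclideanSpace ℝ (Fin m)))
    (Q12 : ℕ → (EuclideanSpace ℝ (Fin m) →L[ℝ] EuclideanSpace ℝ (Fin n)))
    (Q21 : ℕ → (EuclideanSpace ℝ (Fin n) →L[ℝ] EuclideanSpace ℝ (Fin m)))
    (hBinv : ∀ t, B t ∘L Binv t = 1 ∧ Binv t ∘L B t = 1)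
    (hA : ∀ t, ‖A t‖ ≤ a) (hB : ∀ t, ‖Binv t‖ ≤ b)
    (hQ12 : ∀ t, ‖Q12 t‖ ≤ c) (hQ21 : ∀ t, ‖Q21 t‖ ≤ d)
    (ha0 : 0 ≤ a) (hb0 : 0 < b) (hab : a * b < 1)
    (hcd : c * d < ((1 - a * b) / (2 * b)) ^ 2) (T : ℕ)
    (K K' : ℕ → (EuclideanSpace ℝ (Fin n) →L[ℝ] EuclideanSpace ℝ (Fin m)))
    (hKterm : K (T + 1) = 0)
    (hKrec : ∀ t, 1 ≤ t → t ≤ T + 1 →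
      IsUnit (B t + K t ∘L Q12 t) ∧
      (B t + K t ∘L Q12 t) ∘L K (t - 1) = Q21 t + K t ∘L A t)
    (hK'term : K' (T + 2) = 0)
    (hK'rec : ∀ t, 1 ≤ t → t ≤ T + 2 →
      IsUnit (B t + K' t ∘L Q12 t) ∧
      (B t + K' t ∘L Q12 t) ∘L K' (t - 1) = Q21 t + K' t ∘L A t) :
    (∀ j ≤ T + 1, ‖K j - K' j‖ ≤ ‖K (T + 1) - K' (T + 1)‖) ∧
    ‖K (T + 1) - K' (T + 1)‖ = ‖Binv (T + 2) ∘L Q21 (T + 2)‖ ∧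
    ‖Binv (T + 2) ∘L Q21 (T + 2)‖ ≤ b * ‖Q21 (T + 2)‖ := by
  have hc : 0 ≤ c := le_trans (norm_nonneg _) (hQ12 0)
  have hd : 0 ≤ d := le_trans (norm_nonneg _) (hQ21 0)
  have hab0 : 0 ≤ a * b := mul_nonneg ha0 hb0.le
  obtain ⟨s, hs0, hbds, hbcs, hq⟩ := sfacts a b c d ha0 hb0 hc hd hab hcd
  -- K' (T+1) = Binv (T+2) ∘L Q21 (T+2)
  have hK'T1 : K' (T + 1) = Binv (T + 2) ∘L Q21 (T + 2) := by
    obtain ⟨-, e⟩ := hK'rec (T + 2) (by omega) le_rfl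
    rw [hK'term] at e
    simp only [ContinuousLinearMap.zero_comp, add_zero, comp_zero] at e
    have : (T + 2) - 1 = T + 1 := by omega
    rw [this] at e
    have := solveB (B (T + 2)) (Binv (T + 2)) (hBinv (T + 2)).2 0 (K' (T + 1))
      (Q21 (T + 2)) (by simpa using e)
    simpa using this
  have hdiffT1 : ‖K (T + 1) - K' (T + 1)‖ = ‖Binv (T + 2) ∘L Q21 (T + 2)‖ := by
    rw [hKterm, zero_sub, norm_neg, hK'T1]
  have hlast : ‖Binv (T + 2) ∘L Q21 (T + 2)‖ ≤ b * ‖Q21 (T + 2)‖ :=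
    (opNorm_comp_le _ _).trans
      (mul_le_mul_of_nonneg_right (hB _) (norm_nonneg _))
  have hK'T1n : ‖K' (T + 1)‖ ≤ s := by
    rw [hK'T1]
    refine hlast.trans ?_
    calc b * ‖Q21 (T + 2)‖ ≤ b * d := by
          exact mul_le_mul_of_nonneg_left (hQ21 _) hb0.le
      _ ≤ s := hbds
  -- main downward induction
  have main : ∀ i, i ≤ T + 1 →
      ‖K (T + 1 - i)‖ ≤ s ∧ ‖K' (T + 1 - i)‖ ≤ s ∧
      ‖K (T + 1 - i) - K' (T + 1 - i)‖ ≤ ‖K (T + 1) - K' (T + 1)‖ := by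
    intro i
    induction i with
    | zero =>
      intro _
      simp only [Nat.sub_zero]
      exact ⟨by rw [hKterm]; simp [hs0], hK'T1n, le_rfl⟩
    | succ i ih =>
      intro hi
      obtain ⟨hKt, hK't, hΔ⟩ := ih (by omega)
      have ht1 : 1 ≤ T + 1 - i := by omega
      have ht2 : T + 1 - i ≤ T + 1 := by omega
      have hidx : T + 1 - (i + 1) = (T + 1 - i) - 1 := by omega
      obtain ⟨-, eq1⟩ := hKrec (T + 1 - i) ht1 ht2
      obtain ⟨-, eq2⟩ := hK'rec (T + 1 - i) ht1 (by omega)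
      obtain ⟨h1, h2, h3⟩ := stepLem a b c d s hb0 hs0 hc hab0 hbcs hab hq
        (A (T + 1 - i)) (B (T + 1 - i)) (Binv (T + 1 - i)) (hBinv _).2 (hB _)
        (Q12 (T + 1 - i)) (Q21 (T + 1 - i)) (hA _) (hQ12 _) (hQ21 _)
        (K (T + 1 - i)) (K' (T + 1 - i)) (K ((T + 1 - i) - 1)) (K' ((T + 1 - i) - 1))
        hKt hK't eq1 eq2
      rw [hidx]
      exact ⟨h1, h2, h3.trans hΔ⟩
  refine ⟨?_, hdiffT1, hlast⟩
  intro j hj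
  have : j = T + 1 - (T + 1 - j) := by omega
  rw [this]
  exact (main (T + 1 - j) (by omega)).2.2
end
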